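/- arXiv:2407.12719 — 2 statements merged into one kernel-verified Lean document; each statement's English description precedes it below -/
import Mathlib

section
/- Fix an integer n ≥ 2. For S ⊆ {1,…,n−1}, define the alternation set Alt(S) = {i ∈ {1,…,n−2} : exactly one of i and i+1 belongs to S}, and let d_n(S) denote the number of permutations π of {1,…,n} whose descent set is exactly S. Then for all S, T ⊆ {1,…,n−1}, if Alt(S) is a proper subset of Alt(T), then d_n(S) < d_n(T). -/
/-!
Encode a descent set as a word `b : ℕ → Bool`, `b i` recording whether position `i` (counted
from `0`) is a descent. Let `f_b k` count the permutations of `{0,…,L}` with word `b` and first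
value `k`. Deleting the first entry gives the boustrophedon recurrence: `f_b k` is
`∑_{v<k} f_{b'} v` if `b` starts with a descent and `∑_{v≥k} f_{b'} v` otherwise, `b'` being the
shifted word.

If `b t = b (t + 1)`, negating the letters after position `t` adds exactly `t` to the
alternations and makes `f_b` strictly larger in the pointwise order. By the recurrence it is
enough to check this for `t = 0`. There, after complementing values if necessary, `b` starts with
two descents, so `f_{b'}` is monotone, while `f_{¬b'} v = f_{b'} (L - 1 - v)`: the claim is that
the `k` first values of a monotone sequence sum to at most its `k` last ones, strictly for
`k = 1` since a permutation starting with a descent cannot start with `0`.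

A word is determined up to complement by its alternations and complementing values preserves
the counts, so adding the elements of `Alt(T) \ Alt(S)` one at a time proves the theorem.
-/

/-- `descSetCount n S` is the number of permutations `π` of `{1,…,n}` (modeled as `Fin n`,
zero-based) whose descent set is exactly `S`, i.e. for every `1 ≤ i ≤ n-1`,
`π(i) > π(i+1)` iff `i ∈ S`. -/
noncomputable def descSetCount (n : ℕ) (S : Finset ℕ) : ℕ :=
  Nat.card {π : Equiv.Perm (Fin n) //
    ∀ i : ℕ, ∀ h : i + 1 < n,
      (π ⟨i + 1, h⟩ < π ⟨i, Nat.lt_of_succ_lt h⟩ ↔ (i + 1) ∈ S)}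

/-- The alternation set of `S ⊆ {1,…,n-1}`: those `i ∈ {1,…,n-2}` such that exactly one of
`i` and `i + 1` belongs to `S`. -/
def altSet (n : ℕ) (S : Finset ℕ) : Finset ℕ :=
  (Finset.Icc 1 (n - 2)).filter (fun i => (i ∈ S ∧ i + 1 ∉ S) ∨ (i ∉ S ∧ i + 1 ∈ S))

open Finset Equiv Function

theorem Nat.card_subtype_eq_sum_card_fiber {α β : Type*} [Finite α] (p : α → Prop)
    (f : α → β) (s : Finset β) (hf : ∀ a, p a → f a ∈ s) :
    Nat.card {a // p a} = ∑ y ∈ s, Nat.card {a // p a ∧ f a = y} := by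
  classical
  have := Fintype.ofFinite α
  simp only [Nat.card_eq_fintype_card, Fintype.card_subtype]
  rw [card_eq_sum_card_fiberwise (f := f) fun a ha => hf a (mem_filter.1 ha).2]
  simp only [filter_filter]

theorem Finset.sum_range_le_sum_range_reflect_of_monotoneOn {M : Type*} [AddCommMonoid M]
    [PartialOrder M] [IsOrderedAddMonoid M] {g : ℕ → M} {n k : ℕ}
    (hg : MonotoneOn g (Set.Iic n)) (hk : k ≤ n + 1) :
    ∑ v ∈ range k, g v ≤ ∑ v ∈ range k, g (n - v) := by
  rw [← sum_range_reflect (fun v => g (n - v)) k]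
  refine sum_le_sum fun v hv => hg ?_ ?_ ?_ <;> simp only [mem_range, Set.mem_Iic] at * <;> omega

section DescentWord

variable {α β : Type*}

def HasDescentWord [LT α] {n : ℕ} (b : ℕ → Bool) (f : Fin n → α) : Prop :=
  ∀ i (h : i + 1 < n), f ⟨i + 1, h⟩ < f ⟨i, Nat.lt_of_succ_lt h⟩ ↔ b i = true

theorem HasDescentWord.congr_word [LT α] {n : ℕ} {b c : ℕ → Bool} (f : Fin n → α)
    (h : ∀ i, i + 1 < n → b i = c i) : HasDescentWord b f ↔ HasDescentWord c f :=
  forall_congr' fun i => forall_congr' fun hi => by rw [h i hi]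

theorem hasDescentWord_cons [LT α] {n : ℕ} (b : ℕ → Bool) (a : α) (f : Fin (n + 1) → α) :
    HasDescentWord b (Fin.cons a f : Fin (n + 2) → α) ↔
      (f 0 < a ↔ b 0 = true) ∧ HasDescentWord (fun i => b (i + 1)) f := by
  constructor
  · intro h
    have h0 : (Fin.cons a f : Fin (n + 2) → α) (Fin.succ 0) <
        (Fin.cons a f : Fin (n + 2) → α) 0 ↔ b 0 = true := h 0 (by omega)
    rw [Fin.cons_succ, Fin.cons_zero] at h0
    exact ⟨h0, fun i hi => h (i + 1) (by omega)⟩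
  · rintro ⟨h0, h⟩ (_ | i) hi
    · exact h0
    · exact h i (by omega)

theorem hasDescentWord_comp_of_strictMono [LinearOrder α] [Preorder β] {n : ℕ}
    (b : ℕ → Bool) {g : α → β} (hg : StrictMono g) (f : Fin n → α) :
    HasDescentWord b (g ∘ f) ↔ HasDescentWord b f :=
  forall_congr' fun i => forall_congr' fun hi => by rw [comp_apply, comp_apply, hg.lt_iff_lt]

theorem hasDescentWord_not_comp_of_strictAnti [LinearOrder α] [LinearOrder β] {n : ℕ}
    (b : ℕ → Bool) {g : α → β} (hg : StrictAnti g) {f : Fin n → α} (hf : Injective f) :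
    HasDescentWord (fun i => !b i) (g ∘ f) ↔ HasDescentWord b f := by
  refine forall_congr' fun i => forall_congr' fun hi => ?_
  have hne : f ⟨i, Nat.lt_of_succ_lt hi⟩ ≠ f ⟨i + 1, hi⟩ := hf.ne (by simp)
  rw [comp_apply, comp_apply, hg.lt_iff_gt, Bool.not_eq_true', ← Bool.not_eq_true]
  rcases hne.lt_or_gt with h | h <;> simp [h, h.not_gt]

end DescentWord

section ConsPerm

variable {m : ℕ}

def consPerm (k : Fin (m + 1)) (σ : Perm (Fin m)) : Perm (Fin (m + 1)) :=
  (finSuccEquiv m).trans ((optionCongr σ).trans (finSuccEquiv' k).symm)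

theorem coe_consPerm (k : Fin (m + 1)) (σ : Perm (Fin m)) :
    ⇑(consPerm k σ) = Fin.cons k (k.succAbove ∘ σ) := by
  funext i
  cases i using Fin.cases <;> simp [consPerm]

@[simp]
theorem consPerm_apply_zero (k : Fin (m + 1)) (σ : Perm (Fin m)) : consPerm k σ 0 = k := by
  simp [coe_consPerm]

theorem consPerm_injective (k : Fin (m + 1)) : Injective (consPerm k) := by
  intro σ τ h
  rw [← DFunLike.coe_fn_eq, coe_consPerm, coe_consPerm, Fin.cons_inj] at h
  exact DFunLike.coe_fn_eq.1 (Fin.succAbove_right_injective.comp_left h.2)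

theorem consPerm_bijective :
    Bijective fun p : Fin (m + 1) × Perm (Fin m) => consPerm p.1 p.2 := by
  refine (Fintype.bijective_iff_injective_and_card _).2
    ⟨?_, by simp [Fintype.card_perm, Nat.factorial_succ]⟩
  rintro ⟨k, σ⟩ ⟨l, τ⟩ h
  obtain rfl : k = l := by simpa using congrArg (· 0) h
  exact congrArg (Prod.mk k) (consPerm_injective k h)

theorem hasDescentWord_consPerm (b : ℕ → Bool) (k : Fin (m + 2)) (σ : Perm (Fin (m + 1))) :
    HasDescentWord b (consPerm k σ) ↔
      ((σ 0 : ℕ) < k ↔ b 0 = true) ∧ HasDescentWord (fun i => b (i + 1)) σ := by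
  rw [coe_consPerm, hasDescentWord_cons, comp_apply, Fin.succAbove_lt_iff_castSucc_lt,
    Fin.lt_def, Fin.val_castSucc,
    hasDescentWord_comp_of_strictMono _ (Fin.strictMono_succAbove k)]

end ConsPerm

section Counting

noncomputable def descentCount (n : ℕ) (b : ℕ → Bool) : ℕ :=
  Nat.card {π : Perm (Fin n) // HasDescentWord b π}

noncomputable def descentCountWithHead (m : ℕ) (b : ℕ → Bool) (k : ℕ) : ℕ :=
  Nat.card {π : Perm (Fin (m + 1)) // HasDescentWord b π ∧ (π 0 : ℕ) = k}

theorem descentCount_succ (m : ℕ) (b : ℕ → Bool) :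
    descentCount (m + 1) b = ∑ k ∈ range (m + 1), descentCountWithHead m b k :=
  Nat.card_subtype_eq_sum_card_fiber _ (fun π : Perm (Fin (m + 1)) => (π 0 : ℕ)) _
    fun π _ => mem_range.2 (π 0).2

theorem descentCountWithHead_eq_zero {m k : ℕ} (b : ℕ → Bool) (hk : m < k) :
    descentCountWithHead m b k = 0 := by
  have : IsEmpty {π : Perm (Fin (m + 1)) // HasDescentWord b π ∧ (π 0 : ℕ) = k} :=
    ⟨fun ⟨π, _, h0⟩ => by have := (π 0).2; omega⟩
  exact Nat.card_of_isEmpty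

theorem le_of_descentCountWithHead_lt {m k : ℕ} {b c : ℕ → Bool}
    (h : descentCountWithHead m b k < descentCountWithHead m c k) : k ≤ m := by
  by_contra! hk
  simp [descentCountWithHead_eq_zero _ hk] at h

theorem descentCountWithHead_le_iff {m : ℕ} {b c : ℕ → Bool} :
    descentCountWithHead m b ≤ descentCountWithHead m c ↔
      ∀ k ≤ m, descentCountWithHead m b k ≤ descentCountWithHead m c k := by
  refine ⟨fun h k _ => h k, fun h k => ?_⟩
  rcases le_or_gt k m with hk | hk
  · exact h k hk
  · simp [descentCountWithHead_eq_zero _ hk]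

theorem descentCountWithHead_succ_eq_card {m k : ℕ} (b : ℕ → Bool) (hk : k ≤ m + 1) :
    descentCountWithHead (m + 1) b k = Nat.card {σ : Perm (Fin (m + 1)) //
      ((σ 0 : ℕ) < k ↔ b 0 = true) ∧ HasDescentWord (fun i => b (i + 1)) σ} := by
  let k' : Fin (m + 2) := ⟨k, by omega⟩
  refine (Nat.card_congr (Equiv.ofBijective (fun σ => ⟨consPerm k' σ,
    (hasDescentWord_consPerm b k' σ).2 σ.2, by simp [k']⟩) ⟨fun σ τ h => ?_, ?_⟩)).symm
  · exact Subtype.ext (consPerm_injective k' (congrArg Subtype.val h))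
  · rintro ⟨π, hπ, h0⟩
    obtain ⟨⟨l, σ⟩, rfl⟩ := consPerm_bijective.2 π
    obtain rfl : l = k' := Fin.ext (by simpa using h0)
    exact ⟨⟨σ, (hasDescentWord_consPerm b k' σ).1 hπ⟩, rfl⟩

theorem descentCountWithHead_succ {m k : ℕ} (b : ℕ → Bool) (hk : k ≤ m + 1) :
    descentCountWithHead (m + 1) b k =
      ∑ v ∈ (range (m + 1)).filter (fun v => v < k ↔ b 0 = true),
        descentCountWithHead m (fun i => b (i + 1)) v := by
  rw [descentCountWithHead_succ_eq_card b hk, Nat.card_subtype_eq_sum_card_fiber _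
    (fun σ : Perm (Fin (m + 1)) => (σ 0 : ℕ)) ((range (m + 1)).filter fun v => v < k ↔ b 0)
    fun σ hσ => mem_filter.2 ⟨mem_range.2 (σ 0).2, hσ.1⟩]
  refine sum_congr rfl fun v hv => Nat.card_congr (subtypeEquivRight fun σ => ?_)
  rw [mem_filter] at hv
  exact ⟨fun h => ⟨h.1.2, h.2⟩, fun h => ⟨⟨by rw [h.2]; exact hv.2, h.1⟩, h.2⟩⟩

theorem descentCountWithHead_succ_of_descent {m k : ℕ} {b : ℕ → Bool} (hb : b 0 = true)
    (hk : k ≤ m + 1) :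
    descentCountWithHead (m + 1) b k =
      ∑ v ∈ range k, descentCountWithHead m (fun i => b (i + 1)) v := by
  rw [descentCountWithHead_succ b hk]
  congr 1
  ext v
  simp only [hb, iff_true, mem_filter, mem_range]
  omega

theorem descentCountWithHead_succ_of_ascent {m k : ℕ} {b : ℕ → Bool} (hb : b 0 = false)
    (hk : k ≤ m + 1) :
    descentCountWithHead (m + 1) b k =
      ∑ v ∈ Ico k (m + 1), descentCountWithHead m (fun i => b (i + 1)) v := by
  rw [descentCountWithHead_succ b hk]
  congr 1
  ext v
  simp only [hb, Bool.false_eq_true, iff_false, not_lt, mem_filter, mem_range, mem_Ico]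
  omega

theorem descentCountWithHead_monotoneOn {m : ℕ} {b : ℕ → Bool} (hb : b 0 = true) :
    MonotoneOn (descentCountWithHead (m + 1) b) (Set.Iic (m + 1)) := by
  intro k _ l hl hkl
  rw [descentCountWithHead_succ_of_descent hb hl,
    descentCountWithHead_succ_of_descent hb (hkl.trans hl)]
  exact sum_le_sum_of_subset (range_subset_range.2 hkl)

theorem descentCountWithHead_zero_of_descent {m : ℕ} {b : ℕ → Bool} (hb : b 0 = true) :
    descentCountWithHead (m + 1) b 0 = 0 := by
  rw [descentCountWithHead_succ_of_descent hb (Nat.zero_le _), sum_range_zero]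

theorem descentCountWithHead_zero_of_ascent {m : ℕ} {b : ℕ → Bool} (hb : b 0 = false) :
    descentCountWithHead (m + 1) b 0 = descentCount (m + 1) (fun i => b (i + 1)) := by
  rw [descentCountWithHead_succ_of_ascent hb (Nat.zero_le _), descentCount_succ, range_eq_Ico]

theorem exists_hasDescentWord (m : ℕ) (b : ℕ → Bool) :
    ∃ π : Perm (Fin (m + 1)), HasDescentWord b π := by
  induction m generalizing b with
  | zero => exact ⟨1, fun i h => by omega⟩
  | succ m ih =>
    obtain ⟨σ, hσ⟩ := ih fun i => b (i + 1)
    refine ⟨consPerm (if b 0 then Fin.last _ else 0) σ,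
      (hasDescentWord_consPerm ..).2 ⟨?_, hσ⟩⟩
    cases b 0 <;> simp [(σ 0).2]

theorem descentCount_succ_pos (m : ℕ) (b : ℕ → Bool) : 0 < descentCount (m + 1) b := by
  obtain ⟨π, hπ⟩ := exists_hasDescentWord m b
  have : Nonempty {π : Perm (Fin (m + 1)) // HasDescentWord b π} := ⟨⟨π, hπ⟩⟩
  exact Nat.card_pos

theorem descentCount_congr {n : ℕ} {b c : ℕ → Bool} (h : ∀ i, i + 1 < n → b i = c i) :
    descentCount n b = descentCount n c :=
  Nat.card_congr (subtypeEquivRight fun π => HasDescentWord.congr_word π h)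

theorem hasDescentWord_not_revPerm_mul {n : ℕ} (b : ℕ → Bool) (π : Perm (Fin n)) :
    HasDescentWord (fun i => !b i) ((Fin.revPerm : Perm (Fin n)) * π) ↔ HasDescentWord b π :=
  hasDescentWord_not_comp_of_strictAnti b Fin.rev_strictAnti π.injective

theorem descentCount_not (n : ℕ) (b : ℕ → Bool) :
    descentCount n (fun i => !b i) = descentCount n b :=
  (Nat.card_congr (subtypeEquiv (Equiv.mulLeft Fin.revPerm) fun π =>
    (hasDescentWord_not_revPerm_mul b π).symm)).symm

theorem descentCountWithHead_not {m k : ℕ} (b : ℕ → Bool) (hk : k ≤ m) :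
    descentCountWithHead m (fun i => !b i) k = descentCountWithHead m b (m - k) := by
  refine (Nat.card_congr (subtypeEquiv (Equiv.mulLeft Fin.revPerm) fun π => ?_)).symm
  rw [coe_mulLeft, hasDescentWord_not_revPerm_mul, Perm.mul_apply, Fin.revPerm_apply,
    Fin.val_rev]
  have := (π 0).2
  exact and_congr_right' (by omega)

end Counting

section Comparison

def flipAfter (t : ℕ) (b : ℕ → Bool) (i : ℕ) : Bool := if t < i then !b i else b i

theorem flipAfter_not (t : ℕ) (b : ℕ → Bool) :
    flipAfter t (fun i => !b i) = fun i => !flipAfter t b i := by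
  funext i
  unfold flipAfter
  split_ifs <;> rfl

theorem flipAfter_succ_apply_succ (t : ℕ) (b : ℕ → Bool) :
    (fun i => flipAfter (t + 1) b (i + 1)) = flipAfter t (fun i => b (i + 1)) := by
  funext i
  simp [flipAfter]

theorem descentCountWithHead_not_lt_not {m : ℕ} {b c : ℕ → Bool}
    (h : descentCountWithHead m b < descentCountWithHead m c) :
    descentCountWithHead m (fun i => !b i) < descentCountWithHead m (fun i => !c i) := by
  obtain ⟨hle, k, hk⟩ := Pi.lt_def.1 h
  have hkm := le_of_descentCountWithHead_lt hk
  refine Pi.lt_def.2 ⟨descentCountWithHead_le_iff.2 fun j hj => ?_, m - k, ?_⟩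
  · rw [descentCountWithHead_not b hj, descentCountWithHead_not c hj]
    exact hle _
  · rw [descentCountWithHead_not b (Nat.sub_le _ _), descentCountWithHead_not c (Nat.sub_le _ _),
      Nat.sub_sub_self hkm]
    exact hk

theorem descentCountWithHead_succ_lt {m : ℕ} {b c : ℕ → Bool} (h0 : b 0 = c 0)
    (h : descentCountWithHead m (fun i => b (i + 1)) <
      descentCountWithHead m (fun i => c (i + 1))) :
    descentCountWithHead (m + 1) b < descentCountWithHead (m + 1) c := by
  obtain ⟨hle, v, hv⟩ := Pi.lt_def.1 h
  have hvm := le_of_descentCountWithHead_lt hv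
  refine Pi.lt_def.2 ⟨descentCountWithHead_le_iff.2 fun k hk => ?_,
    if b 0 then m + 1 else 0, ?_⟩
  · rw [descentCountWithHead_succ b hk, descentCountWithHead_succ c hk, h0]
    exact sum_le_sum fun v _ => hle v
  · have hk : (if b 0 then m + 1 else 0) ≤ m + 1 := by split <;> omega
    rw [descentCountWithHead_succ b hk, descentCountWithHead_succ c hk, ← h0]
    refine sum_lt_sum (fun v _ => hle v) ⟨v, ?_, hv⟩
    rw [mem_filter, mem_range]
    cases b 0 <;> simp only [Bool.false_eq_true, ↓reduceIte, iff_true, iff_false] <;> omega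

theorem descentCountWithHead_lt_flipAfter_zero {m : ℕ} {b : ℕ → Bool} (hb : b 0 = b 1) :
    descentCountWithHead (m + 2) b < descentCountWithHead (m + 2) (flipAfter 0 b) := by
  wlog hb0 : b 0 = true generalizing b
  · simpa [flipAfter_not] using descentCountWithHead_not_lt_not
      (this (b := fun i => !b i) (by simp [hb]) (by simpa using hb0))
  have hb1 : b 1 = true := hb ▸ hb0
  have hflip0 : flipAfter 0 b 0 = true := by simpa [flipAfter]
  have hshift : (fun i => flipAfter 0 b (i + 1)) = fun i => !b (i + 1) := by
    funext i
    simp [flipAfter]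
  refine Pi.lt_def.2 ⟨descentCountWithHead_le_iff.2 fun k hk => ?_, 1, ?_⟩
  · rw [descentCountWithHead_succ_of_descent hb0 hk,
      descentCountWithHead_succ_of_descent hflip0 hk, hshift]
    calc ∑ v ∈ range k, descentCountWithHead (m + 1) (fun i => b (i + 1)) v
        ≤ ∑ v ∈ range k, descentCountWithHead (m + 1) (fun i => b (i + 1)) (m + 1 - v) :=
          sum_range_le_sum_range_reflect_of_monotoneOn
            (descentCountWithHead_monotoneOn hb1) hk
      _ = ∑ v ∈ range k, descentCountWithHead (m + 1) (fun i => !b (i + 1)) v :=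
          sum_congr rfl fun v hv =>
            (descentCountWithHead_not _ (by simp only [mem_range] at hv; omega)).symm
  · rw [descentCountWithHead_succ_of_descent hb0 (by omega),
      descentCountWithHead_succ_of_descent hflip0 (by omega), hshift, sum_range_one,
      sum_range_one, descentCountWithHead_zero_of_descent hb1,
      descentCountWithHead_zero_of_ascent (by simp [hb1])]
    exact descentCount_succ_pos _ _

theorem descentCountWithHead_lt_flipAfter {t L : ℕ} {b : ℕ → Bool} (hbt : b t = b (t + 1))
    (htL : t + 2 ≤ L) :
    descentCountWithHead L b < descentCountWithHead L (flipAfter t b) := by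
  induction t generalizing L b with
  | zero =>
    obtain ⟨m, rfl⟩ : ∃ m, L = m + 2 := ⟨L - 2, by omega⟩
    exact descentCountWithHead_lt_flipAfter_zero hbt
  | succ t ih =>
    obtain ⟨L, rfl⟩ : ∃ L', L = L' + 1 := ⟨L - 1, by omega⟩
    refine descentCountWithHead_succ_lt (by simp [flipAfter]) ?_
    rw [flipAfter_succ_apply_succ]
    exact ih hbt (by omega)

theorem descentCount_lt_flipAfter {t n : ℕ} {b : ℕ → Bool} (hbt : b t = b (t + 1))
    (htn : t + 3 ≤ n) : descentCount n b < descentCount n (flipAfter t b) := by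
  obtain ⟨L, rfl⟩ : ∃ L, n = L + 1 := ⟨n - 1, by omega⟩
  obtain ⟨hle, k, hk⟩ := Pi.lt_def.1 (descentCountWithHead_lt_flipAfter (L := L) hbt (by omega))
  rw [descentCount_succ, descentCount_succ]
  exact sum_lt_sum (fun j _ => hle j)
    ⟨k, mem_range.2 (Nat.lt_succ_of_le (le_of_descentCountWithHead_lt hk)), hk⟩

end Comparison

section Alternation

def alternationSet (l : ℕ) (b : ℕ → Bool) : Finset ℕ :=
  (range l).filter fun i => b i ≠ b (i + 1)

theorem lt_of_mem_alternationSet {l t : ℕ} {b : ℕ → Bool} (ht : t ∈ alternationSet l b) :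
    t < l :=
  mem_range.1 (mem_filter.1 ht).1

theorem apply_eq_apply_succ_of_notMem_alternationSet {l t : ℕ} {b : ℕ → Bool} (htl : t < l)
    (ht : t ∉ alternationSet l b) : b t = b (t + 1) := by
  by_contra hbt
  exact ht (mem_filter.2 ⟨mem_range.2 htl, hbt⟩)

theorem alternationSet_flipAfter {l t : ℕ} {b : ℕ → Bool} (htl : t < l)
    (hbt : b t = b (t + 1)) :
    alternationSet l (flipAfter t b) = insert t (alternationSet l b) := by
  ext i
  simp only [alternationSet, flipAfter, mem_insert, mem_filter, mem_range]
  rcases lt_trichotomy i t with hit | rfl | hit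
  · simp [hit.ne, hit.not_gt, show ¬ t ≤ i by omega]
  · simp [htl, hbt]
  · simp [hit, hit.ne', hit.le]

theorem eq_iff_eq_zero_of_alternationSet_eq {l : ℕ} {b c : ℕ → Bool}
    (h : alternationSet l b = alternationSet l c) {i : ℕ} (hi : i ≤ l) :
    b i = c i ↔ b 0 = c 0 := by
  induction i with
  | zero => rfl
  | succ i ih =>
    have hmem : b i ≠ b (i + 1) ↔ c i ≠ c (i + 1) := by
      simpa [alternationSet, show i < l by omega] using congrArg (i ∈ ·) h
    rw [← ih (by omega)]
    revert hmem
    cases b i <;> cases b (i + 1) <;> cases c i <;> cases c (i + 1) <;> decide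

theorem descentCount_eq_of_alternationSet_eq {n : ℕ} {b c : ℕ → Bool}
    (h : alternationSet (n - 2) b = alternationSet (n - 2) c) :
    descentCount n b = descentCount n c := by
  have hbc : ∀ i, i + 1 < n → (b i = c i ↔ b 0 = c 0) := fun i hi =>
    eq_iff_eq_zero_of_alternationSet_eq h (by omega)
  by_cases h0 : b 0 = c 0
  · exact descentCount_congr fun i hi => (hbc i hi).2 h0
  · rw [← descentCount_not n c]
    refine descentCount_congr fun i hi => ?_
    have := (hbc i hi).not.2 h0
    revert this
    cases b i <;> cases c i <;> decide

theorem descentCount_le_of_alternationSet_subset {n : ℕ} {b c : ℕ → Bool}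
    (h : alternationSet (n - 2) b ⊆ alternationSet (n - 2) c) :
    descentCount n b ≤ descentCount n c := by
  induction hd : (alternationSet (n - 2) c \ alternationSet (n - 2) b).card generalizing b with
  | zero =>
    rw [card_eq_zero, sdiff_eq_empty_iff_subset] at hd
    exact (descentCount_eq_of_alternationSet_eq (h.antisymm hd)).le
  | succ d ih =>
    obtain ⟨t, ht⟩ := card_pos.1 (by rw [hd]; exact d.succ_pos)
    rw [mem_sdiff] at ht
    have htl := lt_of_mem_alternationSet ht.1
    have hbt := apply_eq_apply_succ_of_notMem_alternationSet htl ht.2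
    have hflip := alternationSet_flipAfter htl hbt
    refine (descentCount_lt_flipAfter hbt (by omega)).le.trans (ih ?_ ?_)
    · rw [hflip]
      exact insert_subset ht.1 h
    · rw [hflip, sdiff_insert, card_erase_of_mem (mem_sdiff.2 ht), hd, Nat.add_sub_cancel]

theorem descentCount_lt_of_alternationSet_ssubset {n : ℕ} {b c : ℕ → Bool}
    (h : alternationSet (n - 2) b ⊂ alternationSet (n - 2) c) :
    descentCount n b < descentCount n c := by
  obtain ⟨t, htc, htb⟩ := exists_of_ssubset h
  have htl := lt_of_mem_alternationSet htc
  have hbt := apply_eq_apply_succ_of_notMem_alternationSet htl htb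
  refine (descentCount_lt_flipAfter hbt (by omega)).trans_le
    (descentCount_le_of_alternationSet_subset ?_)
  rw [alternationSet_flipAfter htl hbt]
  exact insert_subset htc h.subset

end Alternation

theorem descSetCount_eq_descentCount (n : ℕ) (S : Finset ℕ) :
    descSetCount n S = descentCount n fun i => decide (i + 1 ∈ S) :=
  Nat.card_congr (subtypeEquivRight fun π => by simp only [HasDescentWord, decide_eq_true_eq])

theorem altSet_eq_map_alternationSet (n : ℕ) (S : Finset ℕ) :
    altSet n S =
      (alternationSet (n - 2) fun i => decide (i + 1 ∈ S)).map (addRightEmbedding 1) := by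
  ext i
  simp only [altSet, alternationSet, mem_map, mem_filter, mem_range, mem_Icc,
    addRightEmbedding_apply, ne_eq, decide_eq_decide]
  constructor
  · rintro ⟨hi, hS⟩
    exact ⟨i - 1, ⟨by omega, by rw [Nat.sub_add_cancel hi.1]; tauto⟩, by omega⟩
  · rintro ⟨j, ⟨hj, hS⟩, rfl⟩
    exact ⟨by omega, by tauto⟩

theorem stmt17_general (n : ℕ) (S T : Finset ℕ)
    (hAlt : altSet n S ⊂ altSet n T) :
    descSetCount n S < descSetCount n T := by
  rw [altSet_eq_map_alternationSet, altSet_eq_map_alternationSet, map_ssubset_map] at hAlt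
  rw [descSetCount_eq_descentCount, descSetCount_eq_descentCount]
  exact descentCount_lt_of_alternationSet_ssubset hAlt

theorem stmt17 (n : ℕ) (hn : 2 ≤ n) (S T : Finset ℕ)
    (hS : S ⊆ Finset.Icc 1 (n - 1)) (hT : T ⊆ Finset.Icc 1 (n - 1))
    (hAlt : altSet n S ⊂ altSet n T) :
    descSetCount n S < descSetCount n T :=
  stmt17_general n S T hAlt
end

section
/- Let n, m, ℓ, r be positive integers. Let S_L = {i_1 < i_2 < ⋯ < i_ℓ} with i_ℓ = m, let S_R = {j_1 < j_2 < ⋯ < j_r} with j_1 = 2 and j_r ≤ n − m − 2, and let S = S_L ∪ {m+1+j : j ∈ S_R}. Then |P_S(n)| = C(n, m+1) · |P_{S_L}(m+1)| · |P_{S_R}(n−(m+1))|, where C(n, m+1) is the binomial coefficient. -/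
/-!
Cut a permutation `π` of `m + 1 + l` letters after position `m + 1`. Recording the set `A` of
values in the first block together with the standardizations `σ`, `τ` of the two blocks is a
bijection onto triples `(A, σ, τ)`. Away from the positions `m + 1` and `m + 2` at the cut, the
peaks of `π` are those of `σ` together with those of `τ` shifted by `m + 1`. Since two peaks are
never adjacent, the peaks of `σ` at `m` and of `τ` at `2` rule out a peak at the cut.
-/

/-- `IsPeak π i` says that the (1-based) position `i` is a peak of the permutation `π` of
`{1,…,n}` (modeled as `Fin n`, zero-based): `2 ≤ i ≤ n-1` and `π(i-1) < π(i) > π(i+1)`. -/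
def IsPeak {n : ℕ} (π : Equiv.Perm (Fin n)) (i : ℕ) : Prop :=
  ∃ (h2 : 2 ≤ i) (hn : i < n),
    π ⟨i - 2, by omega⟩ < π ⟨i - 1, by omega⟩ ∧ π ⟨i, hn⟩ < π ⟨i - 1, by omega⟩

/-- `peakSetCount n S` is the number of permutations of `{1,…,n}` whose set of peaks is
exactly `S`. -/
noncomputable def peakSetCount (n : ℕ) (S : Finset ℕ) : ℕ :=
  Nat.card {π : Equiv.Perm (Fin n) // ∀ i : ℕ, IsPeak π i ↔ i ∈ S}

open Equiv Finset

variable {n k l : ℕ}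

section Peaks

variable {π : Perm (Fin n)} {i : ℕ}

theorem IsPeak.two_le (h : IsPeak π i) : 2 ≤ i := h.1

theorem IsPeak.lt (h : IsPeak π i) : i < n := h.2.1

theorem IsPeak.not_isPeak_succ (h : IsPeak π i) : ¬IsPeak π (i + 1) := by
  rintro ⟨_, _, hlt, _⟩
  exact lt_asymm h.2.2.2 hlt

theorem isPeak_iff_of_val (a b c : Fin n) (ha : (a : ℕ) + 2 = i) (hb : (b : ℕ) + 1 = i)
    (hc : (c : ℕ) = i) : IsPeak π i ↔ π a < π b ∧ π c < π b := by
  subst hc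
  have ea : (⟨c - 2, by omega⟩ : Fin n) = a := Fin.ext (by simp; omega)
  have eb : (⟨c - 1, by omega⟩ : Fin n) = b := Fin.ext (by simp; omega)
  simp [IsPeak, ea, eb, show 2 ≤ (c : ℕ) by omega]

theorem isPeak_add_iff_of_lt_iff {σ : Perm (Fin k)} (f : Fin k → Fin n) (d : ℕ)
    (hf : ∀ a, (f a : ℕ) = d + a) (hlt : ∀ a b, π (f a) < π (f b) ↔ σ a < σ b)
    (h2 : 2 ≤ i) (hik : i < k) : IsPeak π (d + i) ↔ IsPeak σ i := by
  rw [isPeak_iff_of_val (f ⟨i - 2, by omega⟩) (f ⟨i - 1, by omega⟩) (f ⟨i, hik⟩)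
      (by rw [hf]; simp; omega) (by rw [hf]; simp; omega) (hf _),
    isPeak_iff_of_val ⟨i - 2, by omega⟩ ⟨i - 1, by omega⟩ ⟨i, hik⟩
      (by simp; omega) (by simp; omega) rfl,
    hlt, hlt]

end Peaks

def HasBlockPatterns (π : Perm (Fin (k + l))) (σ : Perm (Fin k)) (τ : Perm (Fin l)) : Prop :=
  (∀ a b, π (Fin.castAdd l a) < π (Fin.castAdd l b) ↔ σ a < σ b) ∧
    ∀ a b, π (Fin.natAdd k a) < π (Fin.natAdd k b) ↔ τ a < τ b

namespace HasBlockPatterns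

variable {π : Perm (Fin (k + l))} {σ : Perm (Fin k)} {τ : Perm (Fin l)}

theorem isPeak_iff_left (h : HasBlockPatterns π σ τ) {i : ℕ} (hi : i < k) :
    IsPeak π i ↔ IsPeak σ i := by
  rcases lt_or_ge i 2 with hi2 | hi2
  · exact iff_of_false (fun hp => by have := hp.two_le; omega)
      (fun hp => by have := hp.two_le; omega)
  · simpa using isPeak_add_iff_of_lt_iff (Fin.castAdd l) 0 (fun a => by simp) h.1 hi2 hi

theorem isPeak_add_iff_right (h : HasBlockPatterns π σ τ) {j : ℕ} (hj : 2 ≤ j) :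
    IsPeak π (k + j) ↔ IsPeak τ j := by
  rcases lt_or_ge j l with hjl | hjl
  · exact isPeak_add_iff_of_lt_iff (Fin.natAdd k) k (fun a => rfl) h.2 hj hjl
  · exact iff_of_false (fun hp => by have := hp.lt; omega) (fun hp => by have := hp.lt; omega)

end HasBlockPatterns

theorem card_compl_of_card_eq {A : Finset (Fin (k + l))} (hA : #A = k) : #Aᶜ = l := by
  rw [card_compl, hA, Fintype.card_fin, Nat.add_sub_cancel_left]

/-- The permutation whose first `k` values are the elements of `A`, in the relative order `σ`,
and whose last `l` values are the elements of `Aᶜ`, in the relative order `τ`. -/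
def shuffle (A : Finset (Fin (k + l))) (hA : #A = k) (σ : Perm (Fin k)) (τ : Perm (Fin l)) :
    Perm (Fin (k + l)) :=
  finSumFinEquiv.symm.trans <| (σ.sumCongr τ).trans <|
    ((A.orderIsoOfFin hA).toEquiv.sumCongr
      ((Aᶜ.orderIsoOfFin (card_compl_of_card_eq hA)).toEquiv.trans
        (subtypeEquivRight fun _ => mem_compl))).trans (sumCompl (· ∈ A))

section Shuffle

variable (A : Finset (Fin (k + l))) (hA : #A = k) (σ : Perm (Fin k)) (τ : Perm (Fin l))

@[simp]
theorem shuffle_castAdd (a : Fin k) :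
    shuffle A hA σ τ (Fin.castAdd l a) = A.orderEmbOfFin hA (σ a) := by
  simp [shuffle]

@[simp]
theorem shuffle_natAdd (a : Fin l) :
    shuffle A hA σ τ (Fin.natAdd k a) = Aᶜ.orderEmbOfFin (card_compl_of_card_eq hA) (τ a) := by
  simp [shuffle]

theorem hasBlockPatterns_shuffle : HasBlockPatterns (shuffle A hA σ τ) σ τ := by
  constructor <;> simp

theorem image_shuffle_castAdd : univ.image (fun a => shuffle A hA σ τ (Fin.castAdd l a)) = A := by
  conv_rhs => rw [← image_orderEmbOfFin_univ A hA, ← image_univ_equiv σ, image_image]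
  simp only [shuffle_castAdd, Function.comp_def]

end Shuffle

abbrev ShuffleData (k l : ℕ) : Type :=
  (Perm (Fin k) × Perm (Fin l)) × {A : Finset (Fin (k + l)) // #A = k}

theorem shuffle_injective :
    Function.Injective fun t : ShuffleData k l => shuffle t.2.1 t.2.2 t.1.1 t.1.2 := by
  rintro ⟨⟨σ, τ⟩, A, hA⟩ ⟨⟨σ', τ'⟩, A', hA'⟩ heq
  dsimp only at heq
  obtain rfl : A = A' := by
    rw [← image_shuffle_castAdd A hA σ τ, ← image_shuffle_castAdd A' hA' σ' τ', heq]
  have hσ : σ = σ' := by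
    ext a : 1
    simpa using congr($heq (Fin.castAdd l a))
  have hτ : τ = τ' := by
    ext a : 1
    simpa using congr($heq (Fin.natAdd k a))
  rw [hσ, hτ]

theorem card_shuffleData : Fintype.card (ShuffleData k l) = Fintype.card (Perm (Fin (k + l))) := by
  simp only [Fintype.card_prod, Fintype.card_perm, Fintype.card_finset_len, Fintype.card_fin]
  rw [← Nat.add_choose_mul_factorial_mul_factorial k l, Nat.choose_symm_add]
  ring

noncomputable def shuffleEquiv : ShuffleData k l ≃ Perm (Fin (k + l)) :=
  Equiv.ofBijective _
    ((Fintype.bijective_iff_injective_and_card _).2 ⟨shuffle_injective, card_shuffleData⟩)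

theorem hasBlockPatterns_shuffleEquiv (t : ShuffleData k l) :
    HasBlockPatterns (shuffleEquiv t) t.1.1 t.1.2 :=
  hasBlockPatterns_shuffle _ _ _ _

section PeakSets

variable {m : ℕ} {SL SR : Finset ℕ}

theorem mem_union_image_of_lt {i : ℕ} (hi : i < m + 1) :
    i ∈ SL ∪ SR.image (fun j => m + 1 + j) ↔ i ∈ SL := by
  simp only [mem_union, mem_image, or_iff_left_iff_imp]
  rintro ⟨j, -, rfl⟩
  omega

theorem add_mem_union_image (hmaxL : ∀ x ∈ SL, x ≤ m) (j : ℕ) :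
    m + 1 + j ∈ SL ∪ SR.image (fun j => m + 1 + j) ↔ j ∈ SR := by
  simp only [mem_union, mem_image, add_right_inj, exists_eq_right, or_iff_right_iff_imp]
  intro hj
  have := hmaxL _ hj
  omega

theorem HasBlockPatterns.isPeak_iff_mem_union_image_iff {π : Perm (Fin (m + 1 + l))}
    {σ : Perm (Fin (m + 1))} {τ : Perm (Fin l)} (h : HasBlockPatterns π σ τ)
    (hmL : m ∈ SL) (hmaxL : ∀ x ∈ SL, x ≤ m) (h2R : 2 ∈ SR)
    (hminR : ∀ x ∈ SR, 2 ≤ x) :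
    (∀ i, IsPeak π i ↔ i ∈ SL ∪ SR.image (fun j => m + 1 + j)) ↔
      (∀ i, IsPeak σ i ↔ i ∈ SL) ∧ ∀ j, IsPeak τ j ↔ j ∈ SR := by
  constructor
  · intro hπ
    constructor
    · intro i
      rcases lt_or_ge i (m + 1) with hi | hi
      · rw [← h.isPeak_iff_left hi, hπ, mem_union_image_of_lt hi]
      · exact iff_of_false (fun hp => by have := hp.lt; omega)
          (fun hs => by have := hmaxL i hs; omega)
    · intro j
      rcases lt_or_ge j 2 with hj | hj
      · exact iff_of_false (fun hp => by have := hp.two_le; omega)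
          (fun hs => by have := hminR j hs; omega)
      · rw [← h.isPeak_add_iff_right hj, hπ, add_mem_union_image hmaxL]
  · rintro ⟨hσ, hτ⟩ i
    rcases lt_or_ge i (m + 1) with hi | hi
    · rw [h.isPeak_iff_left hi, hσ, mem_union_image_of_lt hi]
    obtain ⟨j, rfl⟩ := Nat.exists_eq_add_of_le hi
    rw [add_mem_union_image hmaxL]
    obtain _ | _ | j := j
    · have hpeak : IsPeak π m := (h.isPeak_iff_left m.lt_succ_self).2 ((hσ m).2 hmL)
      exact iff_of_false hpeak.not_isPeak_succ (fun hs => by have := hminR _ hs; omega)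
    · have hpeak : IsPeak π (m + 1 + 2) := (h.isPeak_add_iff_right le_rfl).2 ((hτ 2).2 h2R)
      exact iff_of_false (fun hp => hp.not_isPeak_succ hpeak)
        (fun hs => by have := hminR _ hs; omega)
    · rw [h.isPeak_add_iff_right (by omega), hτ]

theorem peakSetCount_add (hmL : m ∈ SL) (hmaxL : ∀ x ∈ SL, x ≤ m) (h2R : 2 ∈ SR)
    (hminR : ∀ x ∈ SR, 2 ≤ x) :
    peakSetCount (m + 1 + l) (SL ∪ SR.image (fun j => m + 1 + j)) =
      (m + 1 + l).choose (m + 1) * peakSetCount (m + 1) SL * peakSetCount l SR := by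
  have e :
      {π : Perm (Fin (m + 1 + l)) // ∀ i, IsPeak π i ↔ i ∈ SL ∪ SR.image (m + 1 + ·)} ≃
      ({σ : Perm (Fin (m + 1)) // ∀ i, IsPeak σ i ↔ i ∈ SL} ×
        {τ : Perm (Fin l) // ∀ j, IsPeak τ j ↔ j ∈ SR}) ×
        {A : Finset (Fin (m + 1 + l)) // #A = m + 1} :=
    (shuffleEquiv.subtypeEquiv fun t =>
      ((hasBlockPatterns_shuffleEquiv t).isPeak_iff_mem_union_image_iff
        hmL hmaxL h2R hminR).symm).symm.trans
      (prodSubtypeFstEquivSubtypeProd.trans (subtypeProdEquivProd.prodCongr (Equiv.refl _)))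
  rw [peakSetCount, Nat.card_congr e, Nat.card_prod, Nat.card_prod,
    Nat.card_eq_fintype_card (α := {A : Finset (Fin (m + 1 + l)) // #A = m + 1}),
    Fintype.card_finset_len, Fintype.card_fin, peakSetCount, peakSetCount, mul_comm, mul_assoc]

end PeakSets

theorem stmt19_general (n m : ℕ)
    (SL SR : Finset ℕ)
    (hmL : m ∈ SL) (hmaxL : ∀ x ∈ SL, x ≤ m)
    (h2R : 2 ∈ SR) (hminR : ∀ x ∈ SR, 2 ≤ x) (hmaxR : ∀ x ∈ SR, x ≤ n - m - 2) :
    peakSetCount n (SL ∪ SR.image (fun j => m + 1 + j)) =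
      n.choose (m + 1) * peakSetCount (m + 1) SL * peakSetCount (n - (m + 1)) SR := by
  obtain ⟨l, rfl⟩ : ∃ l, n = m + 1 + l := ⟨n - (m + 1), by have := hmaxR 2 h2R; omega⟩
  rw [Nat.add_sub_cancel_left]
  exact peakSetCount_add hmL hmaxL h2R hminR

theorem stmt19 (n m ℓ r : ℕ) (hn : 0 < n) (hm : 0 < m) (hℓ : 0 < ℓ) (hr : 0 < r)
    (SL SR : Finset ℕ) (hcardL : SL.card = ℓ) (hcardR : SR.card = r)
    (hmL : m ∈ SL) (hmaxL : ∀ x ∈ SL, x ≤ m)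
    (h2R : 2 ∈ SR) (hminR : ∀ x ∈ SR, 2 ≤ x) (hmaxR : ∀ x ∈ SR, x ≤ n - m - 2) :
    peakSetCount n (SL ∪ SR.image (fun j => m + 1 + j)) =
      n.choose (m + 1) * peakSetCount (m + 1) SL * peakSetCount (n - (m + 1)) SR :=
  stmt19_general n m SL SR hmL hmaxL h2R hminR hmaxR
end
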